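/- For ω ∈ (0,π), a primary grasped circle exists if and only if ρ < 2 + tan(ω(J_ω−1)/2)·cot(ω/2). Equivalently, with r the inradius of the triangle formed by the relevant phalanx lines, the condition |x_{J_ω} − C_{J_ω}| = (1/ρ^{J_ω})·tan(ω/2)/(tan(ω/2)+tan((J_ω−1)ω/2)) < 1/(ρ^{J_ω}(ρ−1)) holds if and only if ρ < 2 + tan(ω(J_ω−1)/2)·cot(ω/2). -/

import Mathlib

open Real

/-- Representative of `x` modulo `2π` in `[0, 2π)`. -/
noncomputable def rep (x : ℝ) : ℝ := x - 2 * π * (⌊x / (2 * π)⌋ : ℝ)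

/-! With `t = tan (ω / 2) > 0` and `s = tan ((J - 1) ω / 2)`, clearing the positive denominators
turns the inequality into `t (ρ - 1) < t + s`, that is `ρ < 2 + s / t`, as soon as `t + s > 0`.
Here `s ≥ 0`: `tan (x / 2)` only depends on `x` modulo `2π`, and `rep (ω (J - 1)) / 2 ∈ [0, π / 2)`. -/

lemma rep_nonneg (x : ℝ) : 0 ≤ rep x := by
  have h : rep x = 2 * π * Int.fract (x / (2 * π)) := by
    rw [rep, Int.fract, mul_sub, mul_div_cancel₀ x (by positivity)]
  rw [h]
  exact mul_nonneg (by positivity) (Int.fract_nonneg _)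

lemma tan_half_rep (x : ℝ) : tan (rep x / 2) = tan (x / 2) := by
  have h : rep x / 2 = x / 2 - ⌊x / (2 * π)⌋ * π := by rw [rep]; ring
  rw [h, tan_periodic.sub_int_mul_eq]

lemma tan_half_nonneg_of_rep_lt_pi {x : ℝ} (hx : rep x < π) : 0 ≤ tan (x / 2) := by
  rw [← tan_half_rep]
  exact tan_nonneg_of_nonneg_of_le_pi_div_two (by linarith [rep_nonneg x]) (by linarith)

lemma one_div_mul_div_lt_one_div_mul_sub_one_iff {a t s ρ : ℝ} (ha : 0 < a) (ht : 0 < t)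
    (hts : 0 < t + s) (hρ : 1 < ρ) :
    1 / a * t / (t + s) < 1 / (a * (ρ - 1)) ↔ ρ < 2 + s * t⁻¹ := by
  have hρ1 : 0 < ρ - 1 := sub_pos.mpr hρ
  have hcancel : 1 / a * t * (a * (ρ - 1)) = t * (ρ - 1) := by field_simp
  rw [div_lt_div_iff₀ hts (by positivity), hcancel, one_mul, ← sub_lt_iff_lt_add' (b := 2),
    ← div_eq_mul_inv, lt_div_iff₀ ht]
  constructor <;> intro h <;> linarith

theorem primary_grasped_circle_condition (ρ ω : ℝ) (hρ : 1 < ρ) (hω : ω ∈ Set.Ioo 0 π)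
    (J : ℕ)
    (hJ : IsLeast {J : ℕ | 0 < J ∧ rep (ω * ((J : ℝ) - 1)) < π ∧ π ≤ rep (ω * J)} J) :
    (1 / ρ ^ J) * Real.tan (ω / 2) / (Real.tan (ω / 2) + Real.tan (((J : ℝ) - 1) * ω / 2))
        < 1 / (ρ ^ J * (ρ - 1))
      ↔ ρ < 2 + Real.tan (ω * ((J : ℝ) - 1) / 2) * (Real.tan (ω / 2))⁻¹ := by
  obtain ⟨hω0, hωπ⟩ := hω
  have ht : 0 < tan (ω / 2) := tan_pos_of_pos_of_lt_pi_div_two (by linarith) (by linarith)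
  have hs : 0 ≤ tan (ω * ((J : ℝ) - 1) / 2) := tan_half_nonneg_of_rep_lt_pi hJ.1.2.1
  rw [show ((J : ℝ) - 1) * ω / 2 = ω * ((J : ℝ) - 1) / 2 by ring]
  exact one_div_mul_div_lt_one_div_mul_sub_one_iff (by positivity) ht (by linarith) hρ
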